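/- Let (V, τ) be an unshifted Poisson complex over ℝ and ρ a degree-1 element of hom(Λ²V, ℝ). Define D to be the acyclic two-term complex ℂ ←^{id} ℂ in degrees -1 and 0, with generators x in degree 0 and y = dx in degree -1. Let H = V_ℂ ⊕ D ⊕ ℂ with bracket [v₁⊕α₁⊕c₁, v₂⊕α₂⊕c₂] = 0 ⊕ (i ∂ρ(v₁,v₂) x + i ρ(v₁,v₂) y) ⊕ i τ(v₁,v₂). For each real s, the quotient π_s of H by the dg Lie ideal generated by the relations x = s·1 and y = 0 is isomorphic to the Heisenberg Lie algebra Heis(V, τ + s ∂ρ), and the quotient chain map π_s = id_V ⊕ q_s, where q_s : D ⊕ ℂ → ℂ sends (c₁x + c₂y) ⊕ c₃ to s c₁ + c₃, is a quasi-isomorphism. -/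

import Mathlib

open CategoryTheory

noncomputable section

/-- The components of the two-term complex `D = (ℂ ←^{id} ℂ)` concentrated in degrees
`0` and `-1`: each component is `ℂ` in degrees `0, -1` and `0` elsewhere. -/
def DX (n : ℤ) : Type := PLift (n = 0 ∨ n = -1) → ℂ

instance (n : ℤ) : AddCommGroup (DX n) :=
  inferInstanceAs (AddCommGroup (PLift (n = 0 ∨ n = -1) → ℂ))

instance (n : ℤ) : Module ℂ (DX n) :=
  inferInstanceAs (Module ℂ (PLift (n = 0 ∨ n = -1) → ℂ))

/-- The differential of `D`: the identity `ℂ → ℂ` from degree `0` to degree `-1`. -/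
def dD (i j : ℤ) : DX i →ₗ[ℂ] DX j :=
  if h : i = 0 ∧ j = -1 then
    LinearMap.funLeft ℂ ℂ (fun _ : PLift (j = 0 ∨ j = -1) => (⟨Or.inl h.1⟩ : PLift (i = 0 ∨ i = -1)))
  else 0

/-- The acyclic two-term chain complex `D = (ℂ ←^{id} ℂ)` in degrees `0` and `-1`. -/
def Dcx : ChainComplex (ModuleCat ℂ) ℤ where
  X n := ModuleCat.of ℂ (DX n)
  d i j := ModuleCat.ofHom (dD i j)
  shape i j h := by
    have hc : ¬(i = 0 ∧ j = -1) := by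
      intro hc
      exact h (by simp only [ComplexShape.down_Rel]; omega)
    apply ModuleCat.hom_ext
    exact dif_neg hc
  d_comp_d' i j k _ _ := by
    apply ModuleCat.hom_ext
    show (dD j k).comp (dD i j) = 0
    by_cases h1 : j = 0 ∧ k = -1
    · have h2 : ¬(i = 0 ∧ j = -1) := by omega
      have hz : dD i j = 0 := dif_neg h2
      rw [hz, LinearMap.comp_zero]
    · have hz : dD j k = 0 := dif_neg h1
      rw [hz, LinearMap.zero_comp]

/-- The direct sum of two chain complexes of `ℂ`-vector spaces. -/
def prodCx (A B : ChainComplex (ModuleCat ℂ) ℤ) : ChainComplex (ModuleCat ℂ) ℤ where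
  X n := ModuleCat.of ℂ (A.X n × B.X n)
  d i j := ModuleCat.ofHom ((A.d i j).hom.prodMap (B.d i j).hom)
  shape i j h := by
    apply ModuleCat.hom_ext
    show (A.d i j).hom.prodMap (B.d i j).hom = 0
    rw [A.shape i j h, B.shape i j h]
    apply LinearMap.ext
    intro x
    simp
  d_comp_d' i j k _ _ := by
    apply ModuleCat.hom_ext
    apply LinearMap.ext
    intro x
    have hA := LinearMap.congr_fun (congrArg ModuleCat.Hom.hom (A.d_comp_d i j k)) x.1
    have hB := LinearMap.congr_fun (congrArg ModuleCat.Hom.hom (B.d_comp_d i j k)) x.2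
    simp only [ModuleCat.hom_comp, ModuleCat.hom_zero, LinearMap.coe_comp, Function.comp_apply,
      LinearMap.zero_apply] at hA hB
    show ((A.d j k).hom.prodMap (B.d j k).hom) (((A.d i j).hom.prodMap (B.d i j).hom) x) = 0
    simp only [LinearMap.prodMap_apply]
    exact Prod.ext hA hB

open TensorProduct

/-- A degree `n` element of the mapping complex `hom(V ⊗ V, ℝ)` (with `ℝ` concentrated in
degree `0`): a family of bilinear pairings `V_a ⊗ V_b → ℝ` for `a + b = -n`. -/
def Pairing (V : ChainComplex (ModuleCat ℝ) ℤ) (n : ℤ) : Type :=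
  ∀ a : ℤ, V.X a →ₗ[ℝ] V.X (-n - a) →ₗ[ℝ] ℝ

instance (V : ChainComplex (ModuleCat ℝ) ℤ) (n : ℤ) : AddCommGroup (Pairing V n) :=
  inferInstanceAs (AddCommGroup (∀ a : ℤ, V.X a →ₗ[ℝ] V.X (-n - a) →ₗ[ℝ] ℝ))

instance (V : ChainComplex (ModuleCat ℝ) ℤ) (n : ℤ) : Module ℝ (Pairing V n) :=
  inferInstanceAs (Module ℝ (∀ a : ℤ, V.X a →ₗ[ℝ] V.X (-n - a) →ₗ[ℝ] ℝ))

/-- The differential of the mapping complex `hom(V ⊗ V, ℝ)`. -/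
def dPair (V : ChainComplex (ModuleCat ℝ) ℤ) (n m : ℤ) (hm : m = n - 1)
    (ρ : Pairing V n) : Pairing V m :=
  fun a =>
    ((ρ (a - 1)).comp (V.d a (a - 1)).hom).compl₂
        (eqToHom (congrArg V.X (by omega : -m - a = -n - (a - 1)))).hom
      + (a.negOnePow : ℤ) • ((ρ a).compl₂ (V.d (-m - a) (-n - a)).hom)

/-- Graded antisymmetry `τ ∘ γ = - τ` of a pairing. -/
def IsAntisym (V : ChainComplex (ModuleCat ℝ) ℤ) (n : ℤ) (τ : Pairing V n) : Prop :=
  ∀ (a : ℤ) (v : V.X a) (w : V.X (-n - a)),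
    ((a * (-n - a)).negOnePow : ℤ) •
        τ (-n - a) w (eqToHom (congrArg V.X (by omega : a = -n - (-n - a))) v)
      = - τ a v w

/-- The components of the complex with `ℂ` concentrated in degree `0`. -/
abbrev CXc (n : ℤ) : Type := PLift (n = 0) → ℂ

/-- The underlying chain complex `V_ℂ ⊕ D ⊕ ℂ` of the dg Lie algebra `H` of
Proposition A.3 (`x` and `y = dx` span `D`, the unit `1` spans the last summand `ℂ`,
concentrated in degree `0`). -/
def Hcx (V : ChainComplex (ModuleCat ℝ) ℤ) : ChainComplex (ModuleCat ℂ) ℤ where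
  X n := ModuleCat.of ℂ ((ℂ ⊗[ℝ] V.X n) × (DX n × CXc n))
  d i j := ModuleCat.ofHom ((LinearMap.baseChange ℂ (V.d i j).hom).prodMap ((dD i j).prodMap 0))
  shape i j h := by
    apply ModuleCat.hom_ext
    show (LinearMap.baseChange ℂ (V.d i j).hom).prodMap ((dD i j).prodMap 0) = 0
    have hc : ¬(i = 0 ∧ j = -1) := by
      intro hc
      exact h (by simp only [ComplexShape.down_Rel]; omega)
    rw [V.shape i j h, show dD i j = 0 from dif_neg hc, ModuleCat.hom_zero]
    apply LinearMap.ext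
    intro x
    simp
  d_comp_d' i j k _ _ := by
    apply ModuleCat.hom_ext
    have h1 : (LinearMap.baseChange ℂ (V.d j k).hom).comp (LinearMap.baseChange ℂ (V.d i j).hom) = 0 := by
      rw [← LinearMap.baseChange_comp]
      have hd : (V.d j k).hom.comp (V.d i j).hom = 0 := by
        rw [← ModuleCat.hom_comp, V.d_comp_d i j k, ModuleCat.hom_zero]
      rw [hd]
      apply LinearMap.ext
      intro x
      simp
    have h2 : (dD j k).comp (dD i j) = 0 := by
      by_cases hjk : j = 0 ∧ k = -1
      · have h2' : ¬(i = 0 ∧ j = -1) := by omega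
        rw [show dD i j = 0 from dif_neg h2']
        simp
      · rw [show dD j k = 0 from dif_neg hjk]
        simp
    apply LinearMap.ext
    intro x
    show ((LinearMap.baseChange ℂ (V.d j k).hom).prodMap ((dD j k).prodMap 0))
        (((LinearMap.baseChange ℂ (V.d i j).hom).prodMap ((dD i j).prodMap 0)) x) = 0
    simp only [LinearMap.prodMap_apply]
    refine Prod.ext ?_ (Prod.ext ?_ ?_)
    · exact LinearMap.congr_fun h1 x.1
    · exact LinearMap.congr_fun h2 x.2.1
    · simp

/-- The underlying chain complex `V_ℂ ⊕ ℂ` of the Heisenberg dg Lie algebra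
`Heis(V, τ + s ∂ρ)`. -/
def Heiscx (V : ChainComplex (ModuleCat ℝ) ℤ) : ChainComplex (ModuleCat ℂ) ℤ where
  X n := ModuleCat.of ℂ ((ℂ ⊗[ℝ] V.X n) × CXc n)
  d i j := ModuleCat.ofHom ((LinearMap.baseChange ℂ (V.d i j).hom).prodMap 0)
  shape i j h := by
    apply ModuleCat.hom_ext
    show (LinearMap.baseChange ℂ (V.d i j).hom).prodMap 0 = 0
    rw [V.shape i j h, ModuleCat.hom_zero]
    apply LinearMap.ext
    intro x
    simp
  d_comp_d' i j k _ _ := by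
    apply ModuleCat.hom_ext
    have h1 : (LinearMap.baseChange ℂ (V.d j k).hom).comp (LinearMap.baseChange ℂ (V.d i j).hom) = 0 := by
      rw [← LinearMap.baseChange_comp]
      have hd : (V.d j k).hom.comp (V.d i j).hom = 0 := by
        rw [← ModuleCat.hom_comp, V.d_comp_d i j k, ModuleCat.hom_zero]
      rw [hd]
      apply LinearMap.ext
      intro x
      simp
    apply LinearMap.ext
    intro x
    show ((LinearMap.baseChange ℂ (V.d j k).hom).prodMap 0)
        (((LinearMap.baseChange ℂ (V.d i j).hom).prodMap 0) x) = 0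
    simp only [LinearMap.prodMap_apply]
    refine Prod.ext ?_ ?_
    · exact LinearMap.congr_fun h1 x.1
    · simp

/-- The degree `n` component of `q_s : D ⊕ ℂ → ℂ`, `(c₁ x + c₂ y) ⊕ c₃ ↦ s c₁ + c₃`. -/
def qs (s : ℝ) (n : ℤ) : (DX n × CXc n) →ₗ[ℂ] CXc n :=
  ((s : ℂ) • ((LinearMap.funLeft ℂ ℂ
      (fun h : PLift (n = 0) => (⟨Or.inl h.down⟩ : PLift (n = 0 ∨ n = -1)))).comp
        (LinearMap.fst ℂ (DX n) (CXc n))) : (DX n × CXc n) →ₗ[ℂ] CXc n)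
    + LinearMap.snd ℂ (DX n) (CXc n)

/-- The quotient chain map `π_s = id ⊕ q_s : V_ℂ ⊕ D ⊕ ℂ → V_ℂ ⊕ ℂ`. -/
def πs (V : ChainComplex (ModuleCat ℝ) ℤ) (s : ℝ) : Hcx V ⟶ Heiscx V where
  f n := ModuleCat.ofHom (LinearMap.prodMap LinearMap.id (qs s n))
  comm' i j _ := by
    apply ModuleCat.hom_ext
    apply LinearMap.ext
    intro x
    show ((LinearMap.baseChange ℂ (V.d i j).hom).prodMap 0)
        ((LinearMap.prodMap LinearMap.id (qs s i)) x)
      = (LinearMap.prodMap LinearMap.id (qs s j))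
          (((LinearMap.baseChange ℂ (V.d i j).hom).prodMap ((dD i j).prodMap 0)) x)
    simp only [LinearMap.prodMap_apply, LinearMap.id_apply]
    refine Prod.ext rfl ?_
    funext h
    have hne : ¬(i = 0 ∧ j = -1) := by
      have := h.down
      omega
    rw [show dD i j = 0 from dif_neg hne]
    obtain ⟨x1, x2, x3⟩ := x
    simp [qs, dD, dif_neg hne]

/-! `π_s` has the section `ι_s (v ⊕ c) = v ⊕ 0 ⊕ c`, and `ι_s ∘ π_s` is chain homotopic to the
identity through the homotopy `y ↦ -x + s · 1`: it contracts the acyclic summand `D`, and its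
`s · 1` term accounts for `q_s x = s`. So `π_s` is a homotopy equivalence, hence a
quasi-isomorphism. -/

def DX.const (n : ℤ) (a : ℂ) : DX n := fun _ => a

@[simp] lemma DX.const_apply {n : ℤ} (a : ℂ) (p : PLift (n = 0 ∨ n = -1)) :
    DX.const n a p = a := rfl

@[simp] lemma DX.const_zero (n : ℤ) : DX.const n 0 = 0 := rfl

lemma DX.ext {n : ℤ} {α β : DX n} (h : ∀ p, α p = β p) : α = β := funext h

@[simp] lemma DX.zero_apply {n : ℤ} (p : PLift (n = 0 ∨ n = -1)) : (0 : DX n) p = 0 := rfl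

@[simp] lemma DX.add_apply {n : ℤ} (α β : DX n) (p : PLift (n = 0 ∨ n = -1)) :
    (α + β) p = α p + β p := rfl

lemma dD_zero_neg_one (α : DX 0) : dD 0 (-1) α = DX.const (-1) (α ⟨Or.inl rfl⟩) := by
  simp only [dD]
  rfl

def yCoord (i : ℤ) : DX i →ₗ[ℂ] ℂ :=
  if hi : i = -1 then LinearMap.proj (⟨Or.inr hi⟩ : PLift (i = 0 ∨ i = -1)) else 0

lemma yCoord_neg_one (α : DX (-1)) : yCoord (-1) α = α ⟨Or.inr rfl⟩ := by
  simp only [yCoord]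
  rfl

lemma yCoord_of_ne {i : ℤ} (hi : i ≠ -1) : yCoord i = 0 := dif_neg hi

lemma qs_apply (s : ℝ) {n : ℤ} (α : DX n) (c : CXc n) :
    qs s n (α, c) = fun p => s * α ⟨Or.inl p.down⟩ + c p := rfl

section

variable (V : ChainComplex (ModuleCat ℝ) ℤ) (s : ℝ)

def dH (i j : ℤ) :
    ((ℂ ⊗[ℝ] V.X i) × (DX i × CXc i)) →ₗ[ℂ] ((ℂ ⊗[ℝ] V.X j) × (DX j × CXc j)) :=
  (LinearMap.baseChange ℂ (V.d i j).hom).prodMap ((dD i j).prodMap 0)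

@[simp] lemma dH_apply (i j : ℤ) (v : ℂ ⊗[ℝ] V.X i) (α : DX i) (c : CXc i) :
    dH V i j (v, α, c) = ((V.d i j).hom.baseChange ℂ v, dD i j α, 0) := rfl

lemma dH_fst (i j : ℤ) (x : (ℂ ⊗[ℝ] V.X i) × (DX i × CXc i)) :
    (dH V i j x).1 = (V.d i j).hom.baseChange ℂ x.1 := rfl

def ιs : Heiscx V ⟶ Hcx V where
  f n := ModuleCat.ofHom (LinearMap.id.prodMap (LinearMap.inr ℂ (DX n) (CXc n)))
  comm' i j _ := by
    ext ⟨v, c⟩ : 2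
    exact Prod.ext rfl (Prod.ext (map_zero (dD i j)) rfl)

lemma ιs_πs : ιs V ≫ πs V s = 𝟙 _ := by
  ext i ⟨v, c⟩ : 3
  show (v, qs s i (0, c)) = (v, c)
  simp [qs_apply]

def contraction (i j : ℤ) :
    ((ℂ ⊗[ℝ] V.X i) × (DX i × CXc i)) →ₗ[ℂ] ((ℂ ⊗[ℝ] V.X j) × (DX j × CXc j)) :=
  if j = 0 then
    LinearMap.inr ℂ _ _ ∘ₗ
      ((LinearMap.pi fun _ => -LinearMap.id).prod (LinearMap.pi fun _ => (s : ℂ) • LinearMap.id)) ∘ₗ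
        yCoord i ∘ₗ LinearMap.fst ℂ _ _ ∘ₗ LinearMap.snd ℂ _ _
  else 0

lemma contraction_zero_apply (i : ℤ) (v : ℂ ⊗[ℝ] V.X i) (α : DX i) (c : CXc i) :
    contraction V s i 0 (v, α, c) = (0, DX.const 0 (-yCoord i α), fun _ => s * yCoord i α) := by
  simp only [contraction, if_pos]
  rfl

lemma contraction_of_ne_zero (i : ℤ) {j : ℤ} (hj : j ≠ 0) : contraction V s i j = 0 := if_neg hj

lemma contraction_of_ne_neg_one {i : ℤ} (hi : i ≠ -1) (j : ℤ) : contraction V s i j = 0 := by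
  rcases eq_or_ne j 0 with rfl | hj
  · refine LinearMap.ext fun ⟨v, α, c⟩ => ?_
    rw [contraction_zero_apply, yCoord_of_ne hi]
    simp only [LinearMap.zero_apply, neg_zero, mul_zero, DX.const_zero]
    rfl
  · exact contraction_of_ne_zero V s i hj

lemma contraction_fst (i j : ℤ) (x) : (contraction V s i j x).1 = 0 := by
  unfold contraction
  split_ifs <;> rfl

lemma πs_ιs_apply_eq_contraction (i : ℤ) (v : ℂ ⊗[ℝ] V.X i) (α : DX i) (c : CXc i) :
    ((v, 0, qs s i (α, c)) : (ℂ ⊗[ℝ] V.X i) × (DX i × CXc i)) =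
      contraction V s (i - 1) i (dH V i (i - 1) (v, α, c))
        + dH V (i + 1) i (contraction V s i (i + 1) (v, α, c)) + (v, α, c) := by
  refine Prod.ext ?_ (Prod.ext (DX.ext fun p => ?_) (funext fun p => ?_))
  · simp [dH_fst, contraction_fst]
  · obtain ⟨rfl | rfl⟩ := p
    · simp [contraction_zero_apply, contraction_of_ne_zero, dD_zero_neg_one, yCoord_neg_one]
    · -- `-1 + 1` must be normalised inside the types before `dD_zero_neg_one` can fire
      dsimp only [Int.reduceAdd]
      simp [contraction_zero_apply, contraction_of_ne_zero, dD_zero_neg_one, yCoord_neg_one]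
  · obtain ⟨rfl⟩ := p
    simp [contraction_zero_apply, contraction_of_ne_zero, dD_zero_neg_one, yCoord_neg_one, qs_apply]

def contractionHom (i j : ℤ) : (Hcx V).X i ⟶ (Hcx V).X j :=
  ModuleCat.ofHom (contraction V s i j)

def πsιsHomotopy : Homotopy (πs V s ≫ ιs V) (𝟙 (Hcx V)) where
  hom := contractionHom V s
  zero i j hij := by
    unfold contractionHom
    rcases eq_or_ne j 0 with rfl | hj
    · rw [contraction_of_ne_neg_one V s (fun hi => hij (by simp [hi])), ModuleCat.ofHom_zero]
      rfl
    · rw [contraction_of_ne_zero V s i hj, ModuleCat.ofHom_zero]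
      rfl
  comm i := by
    rw [dNext_eq _ (by simp : (ComplexShape.down ℤ).Rel i (i - 1)),
      prevD_eq _ (by simp : (ComplexShape.down ℤ).Rel (i + 1) i)]
    ext ⟨v, α, c⟩ : 2
    exact πs_ιs_apply_eq_contraction V s i v α c

def πsHomotopyEquiv : HomotopyEquiv (Hcx V) (Heiscx V) where
  hom := πs V s
  inv := ιs V
  homotopyHomInvId := πsιsHomotopy V s
  homotopyInvHomId := Homotopy.ofEq (ιs_πs V s)

end

theorem stmt14 (V : ChainComplex (ModuleCat ℝ) ℤ) (s : ℝ) :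
    QuasiIso (πs V s) :=
  (πsHomotopyEquiv V s).quasiIso_hom

end
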